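/- Let μ₁ be a probability measure on ℝ^p such that for every θ with ‖θ‖ = 1 the distribution function of θᵀX under μ₁ is Lipschitz uniformly over such θ, and such that no proper linear subspace S ⊂ ℝ^p satisfies μ₁(S) = 1. Let X₁₁, X₁₂, … be i.i.d. with law μ₁, let h = h_{n₁} be a positive sequence tending to zero, and define TPR(θ, δ) = μ₁{x : θᵀx > δ} and T̃PR_{n₁}(θ, δ) = n₁^{-1} Σ_{i=1}^{n₁} Φ((θᵀX₁ᵢ − δ)/h), where Φ is the standard normal distribution function. Then sup over (θ, δ) ∈ Ω of | T̃PR_{n₁}(θ, δ) − TPR(θ, δ) | converges to zero almost surely as n₁ → ∞, where Ω = {(θ, δ) ∈ ℝ^p × ℝ : ‖θ‖ = 1}. -/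

import Mathlib

/-!
The empirical TPR `n⁻¹ ∑ 1{θᵀX_i > δ}` converges to TPR uniformly over `Ω` almost surely, by a
bracketing (Glivenko–Cantelli) argument: off a ball of small `μ₁`-mass, half-spaces whose
directions lie in a finite net of the sphere and whose thresholds lie on a finite grid bracket every
half-space, the uniform Lipschitz bound on the distribution functions of `θᵀX` makes these brackets
`ε`-tight, and the strong law only has to be applied at the finitely many bracket ends.
Smoothing costs little: `Φ((t - δ)/h)` differs from `1{t > δ}` by at most the indicator of
`δ - ε < t ≤ δ + ε` plus the Gaussian mass outside `[-ε/h, ε/h]`. The empirical mass of that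
slab is, by the first step and the Lipschitz bound, at most `2Mε` in the limit, and the
Gaussian tail vanishes as `h → 0`.
-/

open MeasureTheory Filter Topology

noncomputable def stdGaussianCDF (u : ℝ) : ℝ :=
  ∫ w in Set.Iic u, (Real.sqrt (2 * Real.pi))⁻¹ * Real.exp (-(w ^ 2) / 2)

open ProbabilityTheory Finset
open scoped BigOperators NNReal RealInnerProductSpace

section UniformConvergence

variable {ι β : Type*} {l : Filter ι} {F : ι → β → ℝ} {f : β → ℝ} {s : Set β}

lemma tendstoUniformlyOn_of_forall_eventually_abs_sub_le (C : ℝ)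
    (h : ∀ ε > 0, ∀ᶠ n in l, ∀ x ∈ s, |F n x - f x| ≤ C * ε) : TendstoUniformlyOn F f l s := by
  refine Metric.tendstoUniformlyOn_iff.2 fun ε hε => ?_
  have hC : 0 < |C| + 1 := by positivity
  filter_upwards [h (ε / (|C| + 1)) (div_pos hε hC)] with n hn x hx
  rw [dist_comm, Real.dist_eq]
  calc |F n x - f x| ≤ C * (ε / (|C| + 1)) := hn x hx
    _ ≤ |C| * (ε / (|C| + 1)) := mul_le_mul_of_nonneg_right (le_abs_self C) (by positivity)
    _ < ε := by
      rw [mul_div_assoc', div_lt_iff₀ hC]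
      nlinarith

lemma tendsto_sSup_abs_sub_of_tendstoUniformlyOn (h : TendstoUniformlyOn F f l s) :
    Tendsto (fun n => sSup ((fun x => |F n x - f x|) '' s)) l (𝓝 0) := by
  refine Metric.tendsto_nhds.2 fun ε hε => ?_
  filter_upwards [Metric.tendstoUniformlyOn_iff.1 h (ε / 2) (half_pos hε)] with n hn
  have hle : sSup ((fun x => |F n x - f x|) '' s) ≤ ε / 2 := by
    refine Real.sSup_le ?_ (half_pos hε).le
    rintro _ ⟨x, hx, rfl⟩
    dsimp only
    rw [abs_sub_comm, ← Real.dist_eq]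
    exact (hn x hx).le
  have hnonneg : 0 ≤ sSup ((fun x => |F n x - f x|) '' s) :=
    Real.sSup_nonneg (by rintro _ ⟨x, -, rfl⟩; exact abs_nonneg _)
  rw [Real.dist_0_eq_abs, abs_of_nonneg hnonneg]
  linarith

lemma ae_tendstoUniformlyOn_of_forall_pos {Ω : Type*} [MeasurableSpace Ω] {P : Measure Ω}
    {F : Ω → ι → β → ℝ} (h : ∀ ε > 0, ∀ᵐ ω ∂P, ∀ᶠ n in l, ∀ x ∈ s, |F ω n x - f x| ≤ ε) :
    ∀ᵐ ω ∂P, TendstoUniformlyOn (F ω) f l s := by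
  filter_upwards [ae_all_iff.2 fun m : ℕ => h (1 / (m + 1)) Nat.one_div_pos_of_nat] with ω hω
  refine Metric.tendstoUniformlyOn_iff.2 fun ε hε => ?_
  obtain ⟨m, hm⟩ := exists_nat_one_div_lt hε
  filter_upwards [hω m] with n hn x hx
  rw [dist_comm, Real.dist_eq]
  exact (hn x hx).trans_lt hm

end UniformConvergence

lemma expect_range_eq_inv_mul_sum (f : ℕ → ℝ) (n : ℕ) :
    𝔼 i ∈ range n, f i = (n : ℝ)⁻¹ * ∑ i ∈ range n, f i := by
  rw [expect_eq_sum_div_card, card_range, div_eq_inv_mul]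

section EmpiricalFrequency

variable {Ω α : Type*}

noncomputable def empiricalFreq (x : ℕ → α) (A : Set α) (n : ℕ) : ℝ :=
  𝔼 i ∈ range n, A.indicator 1 (x i)

lemma empiricalFreq_mono (x : ℕ → α) {A B : Set α} (hAB : A ⊆ B) (n : ℕ) :
    empiricalFreq x A n ≤ empiricalFreq x B n :=
  expect_le_expect fun _ _ => Set.indicator_le_indicator_of_subset hAB (fun _ => zero_le_one) _

variable [MeasurableSpace Ω] [MeasurableSpace α] {P : Measure Ω} {μ : Measure α} {X : ℕ → Ω → α}

lemma ae_tendsto_empiricalFreq [IsProbabilityMeasure μ]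
    (hindep : Pairwise (Function.onFun (· ⟂ᵢ[P] ·) X)) (hid : ∀ i, P.map (X i) = μ)
    {A : Set α} (hA : MeasurableSet A) :
    ∀ᵐ ω ∂P, Tendsto (empiricalFreq (X · ω) A) atTop (𝓝 (μ.real A)) := by
  have hX : ∀ i, AEMeasurable (X i) P := fun i =>
    .of_map_ne_zero (by rw [hid i]; exact NeZero.ne μ)
  have hf : Measurable (A.indicator (1 : α → ℝ)) := measurable_one.indicator hA
  have hint : Integrable (A.indicator 1 ∘ X 0) P :=
    (integrable_map_measure hf.aestronglyMeasurable (hX 0)).1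
      (by rw [hid 0]; exact (integrable_const 1).indicator hA)
  have hmean : ∫ ω, (A.indicator 1 ∘ X 0) ω ∂P = μ.real A := by
    rw [← integral_indicator_one hA, ← hid 0, integral_map (hX 0) hf.aestronglyMeasurable]
    rfl
  have hslln := strong_law_ae (fun i => A.indicator 1 ∘ X i) hint
    (fun i j hij => (hindep hij).comp hf hf)
    (fun i => (IdentDistrib.mk (hX i) (hX 0) (by rw [hid i, hid 0])).comp hf)
  filter_upwards [hslln] with ω hω
  rw [hmean] at hω
  refine hω.congr fun n => ?_
  simp only [empiricalFreq, expect_range_eq_inv_mul_sum, smul_eq_mul, Function.comp_apply]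

structure IsFiniteBracketing {ι : Type*} (μ : Measure α) (C : ι → Set α) (s : Set ι) (ε : ℝ)
    (B : Set (Set α × Set α)) : Prop where
  finite : B.Finite
  measurableSet_fst : ∀ b ∈ B, MeasurableSet b.1
  measurableSet_snd : ∀ b ∈ B, MeasurableSet b.2
  measureReal_snd_le : ∀ b ∈ B, μ.real b.2 ≤ μ.real b.1 + ε
  exists_mem_subset : ∀ i ∈ s, ∃ b ∈ B, b.1 ⊆ C i ∧ C i ⊆ b.2

variable {ι : Type*} {C : ι → Set α} {s : Set ι}

lemma IsFiniteBracketing.eventually_abs_empiricalFreq_sub_le [IsFiniteMeasure μ] {ε : ℝ}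
    {B : Set (Set α × Set α)} (hB : IsFiniteBracketing μ C s ε B)
    {x : ℕ → α} (hx : ∀ b ∈ B, Tendsto (empiricalFreq x b.1) atTop (𝓝 (μ.real b.1)) ∧
      Tendsto (empiricalFreq x b.2) atTop (𝓝 (μ.real b.2)))
    {η : ℝ} (hη : 0 < η) :
    ∀ᶠ n in atTop, ∀ i ∈ s, |empiricalFreq x (C i) n - μ.real (C i)| ≤ ε + η := by
  have hclose : ∀ᶠ n in atTop, ∀ b ∈ B, |empiricalFreq x b.1 n - μ.real b.1| ≤ η ∧
      |empiricalFreq x b.2 n - μ.real b.2| ≤ η := by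
    refine (hB.finite.eventually_all).2 fun b hb => ?_
    simp only [← Real.dist_eq, ← Metric.mem_closedBall]
    exact ((hx b hb).1.eventually (Metric.closedBall_mem_nhds _ hη)).and
      ((hx b hb).2.eventually (Metric.closedBall_mem_nhds _ hη))
  filter_upwards [hclose] with n hn i hi
  obtain ⟨b, hbB, hlower, hupper⟩ := hB.exists_mem_subset i hi
  obtain ⟨hfst, hsnd⟩ := hn b hbB
  have := empiricalFreq_mono x hlower n
  have := empiricalFreq_mono x hupper n
  have := measureReal_mono hlower (μ := μ)
  have := measureReal_mono hupper (μ := μ)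
  have := hB.measureReal_snd_le b hbB
  rw [abs_le] at hfst hsnd ⊢
  constructor <;> linarith

theorem ae_tendstoUniformlyOn_empiricalFreq_of_isFiniteBracketing [IsProbabilityMeasure μ]
    (hindep : Pairwise (Function.onFun (· ⟂ᵢ[P] ·) X)) (hid : ∀ i, P.map (X i) = μ)
    (hB : ∀ ε > 0, ∃ B, IsFiniteBracketing μ C s ε B) :
    ∀ᵐ ω ∂P, TendstoUniformlyOn (fun n i => empiricalFreq (X · ω) (C i) n)
      (fun i => μ.real (C i)) atTop s := by
  refine ae_tendstoUniformlyOn_of_forall_pos fun ε hε => ?_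
  obtain ⟨B, hB⟩ := hB (ε / 2) (half_pos hε)
  have hslln : ∀ᵐ ω ∂P, ∀ b ∈ B, Tendsto (empiricalFreq (X · ω) b.1) atTop (𝓝 (μ.real b.1)) ∧
      Tendsto (empiricalFreq (X · ω) b.2) atTop (𝓝 (μ.real b.2)) :=
    (ae_ball_iff hB.finite.countable).2 fun b hb =>
      (ae_tendsto_empiricalFreq hindep hid (hB.measurableSet_fst b hb)).and
        (ae_tendsto_empiricalFreq hindep hid (hB.measurableSet_snd b hb))
  filter_upwards [hslln] with ω hω
  simpa only [add_halves] using hB.eventually_abs_empiricalFreq_sub_le hω (half_pos hε)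

end EmpiricalFrequency

lemma tendsto_measureReal_norm_gt_atTop {E : Type*} [NormedAddCommGroup E] [MeasurableSpace E]
    [OpensMeasurableSpace E] (μ : Measure E) [IsFiniteMeasure μ] :
    Tendsto (fun R : ℝ => μ.real {x | R < ‖x‖}) atTop (𝓝 0) := by
  have h := tendsto_measure_iInter_atTop (μ := μ) (s := fun R : ℝ => {x : E | R < ‖x‖})
    (fun R => (measurableSet_lt measurable_const measurable_norm).nullMeasurableSet)
    (fun R S hRS x hx => hRS.trans_lt hx) ⟨0, measure_ne_top _ _⟩
  have hempty : ⋂ R : ℝ, {x : E | R < ‖x‖} = ∅ :=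
    Set.eq_empty_of_forall_notMem fun x hx => lt_irrefl ‖x‖ (Set.mem_iInter.1 hx ‖x‖)
  rw [hempty, measure_empty] at h
  exact (ENNReal.tendsto_toReal ENNReal.zero_ne_top).comp h

section Halfspace

variable {E : Type*} [NormedAddCommGroup E] [InnerProductSpace ℝ E]

def upperHalfspace (θ : E) (δ : ℝ) : Set E := {x | δ < ⟪θ, x⟫}

lemma upperHalfspace_subset_norm_gt {θ : E} (hθ : ‖θ‖ = 1) {R δ : ℝ} (hδ : R ≤ δ) :
    upperHalfspace θ δ ⊆ {x | R < ‖x‖} := fun x hx => by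
  have := real_inner_le_norm θ x
  rw [hθ, one_mul] at this
  exact hδ.trans_lt (hx.trans_le this)

lemma norm_gt_compl_subset_upperHalfspace {θ : E} (hθ : ‖θ‖ = 1) {R δ : ℝ} (hδ : δ < -R) :
    {x | R < ‖x‖}ᶜ ⊆ upperHalfspace θ δ := fun x (hx : ¬R < ‖x‖) => by
  have := neg_le_of_abs_le (abs_real_inner_le_norm θ x)
  rw [hθ, one_mul] at this
  exact hδ.trans_le ((neg_le_neg (not_lt.1 hx)).trans this)

lemma upperHalfspace_bracket {θ θ' : E} {R ε δ d d' : ℝ} (hθ : ‖θ - θ'‖ * R ≤ ε)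
    (hd : d + ε ≤ δ) (hd' : δ + ε ≤ d') :
    upperHalfspace θ' d' \ {x | R < ‖x‖} ⊆ upperHalfspace θ δ ∧
      upperHalfspace θ δ ⊆ upperHalfspace θ' d ∪ {x | R < ‖x‖} := by
  have hclose : ∀ x : E, ‖x‖ ≤ R → |⟪θ, x⟫ - ⟪θ', x⟫| ≤ ε := fun x hx => by
    rw [← inner_sub_left]
    exact (abs_real_inner_le_norm _ _).trans
      ((mul_le_mul_of_nonneg_left hx (norm_nonneg _)).trans hθ)
  refine ⟨fun x ⟨hx, hxR⟩ => ?_, fun x hx => or_iff_not_imp_right.2 fun hxR => ?_⟩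
  · have := (abs_le.1 (hclose x (not_lt.1 hxR))).1
    change δ < ⟪θ, x⟫
    change d' < ⟪θ', x⟫ at hx
    linarith
  · have := (abs_le.1 (hclose x (not_lt.1 hxR))).2
    change d < ⟪θ', x⟫
    change δ < ⟪θ, x⟫ at hx
    linarith

variable [MeasurableSpace E] [BorelSpace E]

lemma measurableSet_upperHalfspace (θ : E) (δ : ℝ) : MeasurableSet (upperHalfspace θ δ) :=
  measurableSet_lt measurable_const ((continuous_const.inner continuous_id).measurable)

lemma lipschitzWith_measureReal_upperHalfspace (μ : Measure E) [IsFiniteMeasure μ] {θ : E}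
    {K : ℝ≥0} (h : ∀ s u : ℝ,
      |μ.real {x | ⟪θ, x⟫ ≤ s} - μ.real {x | ⟪θ, x⟫ ≤ u}| ≤ K * |s - u|) :
    LipschitzWith K (fun δ => μ.real (upperHalfspace θ δ)) := by
  refine LipschitzWith.of_dist_le_mul fun s u => ?_
  have hcompl : ∀ δ, upperHalfspace θ δ = {x | ⟪θ, x⟫ ≤ δ}ᶜ := fun δ => by
    ext x; simp [upperHalfspace]
  have hmeas : ∀ δ, MeasurableSet {x : E | ⟪θ, x⟫ ≤ δ} := fun δ =>
    measurableSet_le ((continuous_const.inner continuous_id).measurable) measurable_const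
  rw [Real.dist_eq, Real.dist_eq, hcompl, hcompl, measureReal_compl (hmeas s),
    measureReal_compl (hmeas u), sub_sub_sub_cancel_left, abs_sub_comm]
  exact h s u

theorem exists_isFiniteBracketing_upperHalfspace [FiniteDimensional ℝ E] (μ : Measure E)
    [IsFiniteMeasure μ] {K : ℝ≥0}
    (hK : ∀ θ : E, ‖θ‖ = 1 → LipschitzWith K (fun δ => μ.real (upperHalfspace θ δ)))
    {ε : ℝ} (hε : 0 < ε) :
    ∃ B, IsFiniteBracketing μ (fun q : E × ℝ => upperHalfspace q.1 q.2) {q | ‖q.1‖ = 1}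
      ((3 * K + 2) * ε) B := by
  obtain ⟨R, hμR, hR⟩ := (((tendsto_measureReal_norm_gt_atTop μ).eventually
    (eventually_le_nhds hε)).and (eventually_gt_atTop 0)).exists
  obtain ⟨T, hT, hTfin, hTcover⟩ := Metric.finite_approx_of_totallyBounded
    (isCompact_sphere (0 : E) 1).totallyBounded (ε / R) (div_pos hε hR)
  obtain ⟨N, hN⟩ := exists_nat_ge (R / ε)
  rw [div_le_iff₀ hε] at hN
  set tail := {x : E | R < ‖x‖}
  have htail : MeasurableSet tail := measurableSet_lt measurable_const measurable_norm
  -- On `‖x‖ ≤ R` the net moves `⟪θ, x⟫` by at most `ε`; thresholds `|δ| ≥ R` need no net.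
  let bracket : E × ℤ → Set E × Set E := fun p =>
    (upperHalfspace p.1 ((p.2 + 2) * ε) \ tail, upperHalfspace p.1 ((p.2 - 1) * ε) ∪ tail)
  have hεK : ε ≤ (3 * K + 2) * ε := by nlinarith [K.coe_nonneg]
  refine ⟨{(∅, tail), (tailᶜ, Set.univ)} ∪ bracket '' (T ×ˢ Set.Icc (-N : ℤ) N),
    ⟨?_, ?_, ?_, ?_, ?_⟩⟩
  · exact (Set.toFinite _).union ((hTfin.prod (Set.finite_Icc _ _)).image _)
  · rintro b ((rfl | rfl) | ⟨p, -, rfl⟩)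
    · exact .empty
    · exact htail.compl
    · exact (measurableSet_upperHalfspace _ _).diff htail
  · rintro b ((rfl | rfl) | ⟨p, -, rfl⟩)
    · exact htail
    · exact .univ
    · exact (measurableSet_upperHalfspace _ _).union htail
  · rintro b ((rfl | rfl) | ⟨⟨θ', k⟩, ⟨hθ', -⟩, rfl⟩)
    · simp only [measureReal_empty, zero_add]
      exact hμR.trans hεK
    · rw [measureReal_compl htail]
      linarith
    · have hlip := (hK θ' (by simpa using hT hθ')).dist_le_mul ((k - 1) * ε) ((k + 2) * ε)
      have hgap : |(k - 1) * ε - (k + 2) * ε| = 3 * ε := by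
        rw [show (k - 1) * ε - (k + 2) * ε = -(3 * ε) by ring, abs_neg, abs_of_pos (by positivity)]
      rw [Real.dist_eq, Real.dist_eq, hgap, abs_le] at hlip
      have hunion := measureReal_union_le (μ := μ) (upperHalfspace θ' ((k - 1) * ε)) tail
      have hdiff : μ.real (upperHalfspace θ' ((k + 2) * ε)) ≤
          μ.real (upperHalfspace θ' ((k + 2) * ε) \ tail) + μ.real tail :=
        (measureReal_mono (Set.subset_sdiff_union _ _)).trans (measureReal_union_le _ _)
      linarith
  · rintro ⟨θ, δ⟩ (hθ : ‖θ‖ = 1)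
    rcases le_or_gt R δ with hδ | hδ
    · exact ⟨(∅, tail), by simp, Set.empty_subset _, upperHalfspace_subset_norm_gt hθ hδ⟩
    rcases lt_or_ge δ (-R) with hδ' | hδ'
    · exact ⟨(tailᶜ, Set.univ), by simp, norm_gt_compl_subset_upperHalfspace hθ hδ',
        Set.subset_univ _⟩
    obtain ⟨θ', hθ'T, hθθ'⟩ : ∃ θ' ∈ T, dist θ θ' < ε / R := by
      simpa using hTcover (by simpa using hθ)
    set k := ⌊δ / ε⌋
    have hk : k * ε ≤ δ ∧ δ < (k + 1) * ε :=
      ⟨(le_div_iff₀ hε).1 (Int.floor_le _), (div_lt_iff₀ hε).1 (Int.lt_floor_add_one _)⟩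
    have hkN : k ∈ Set.Icc (-N : ℤ) N := by
      have hup : (k : ℝ) < N := lt_of_mul_lt_mul_right (by linarith) hε.le
      have hlow : (-N : ℝ) < k + 1 := lt_of_mul_lt_mul_right (by linarith) hε.le
      constructor
      · have : (-N : ℤ) < k + 1 := by exact_mod_cast hlow
        omega
      · exact_mod_cast hup.le
    refine ⟨bracket (θ', k), Or.inr ⟨(θ', k), ⟨hθ'T, hkN⟩, rfl⟩,
      upperHalfspace_bracket (ε := ε) ?_ ?_ ?_⟩
    · rw [← dist_eq_norm]
      exact ((lt_div_iff₀ hR).1 hθθ').le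
    · linarith
    · linarith

end Halfspace

theorem ae_tendstoUniformlyOn_empiricalFreq_upperHalfspace {Ω E : Type*} [MeasurableSpace Ω]
    [NormedAddCommGroup E] [InnerProductSpace ℝ E] [FiniteDimensional ℝ E] [MeasurableSpace E]
    [BorelSpace E] {P : Measure Ω} {μ : Measure E} [IsProbabilityMeasure μ] {X : ℕ → Ω → E}
    (hindep : Pairwise (Function.onFun (· ⟂ᵢ[P] ·) X)) (hid : ∀ i, P.map (X i) = μ) {K : ℝ≥0}
    (hK : ∀ θ : E, ‖θ‖ = 1 → LipschitzWith K (fun δ => μ.real (upperHalfspace θ δ))) :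
    ∀ᵐ ω ∂P, TendstoUniformlyOn
      (fun n (q : E × ℝ) => empiricalFreq (X · ω) (upperHalfspace q.1 q.2) n)
      (fun q => μ.real (upperHalfspace q.1 q.2)) atTop {q | ‖q.1‖ = 1} := by
  refine ae_tendstoUniformlyOn_empiricalFreq_of_isFiniteBracketing hindep hid fun ε hε => ?_
  have hK2 : (0 : ℝ) < 3 * K + 2 := by positivity
  simpa only [mul_div_cancel₀ ε hK2.ne'] using
    exists_isFiniteBracketing_upperHalfspace μ hK (div_pos hε hK2)

lemma stdGaussianCDF_eq_cdf : stdGaussianCDF = cdf (gaussianReal 0 1) := by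
  ext u
  rw [cdf_eq_real, measureReal_def, gaussianReal_apply_eq_integral 0 one_ne_zero,
    ENNReal.toReal_ofReal (setIntegral_nonneg measurableSet_Iic
      fun x _ => gaussianPDFReal_nonneg 0 1 x)]
  simp [stdGaussianCDF, gaussianPDFReal]

section Smoothing

variable (ν : Measure ℝ)

noncomputable def cdfTail (u : ℝ) : ℝ := cdf ν (-u) + (1 - cdf ν u)

lemma tendsto_cdfTail_atTop : Tendsto (cdfTail ν) atTop (𝓝 0) := by
  show Tendsto (fun u => cdf ν (-u) + (1 - cdf ν u)) atTop (𝓝 0)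
  simpa using ((tendsto_cdf_atBot ν).comp tendsto_neg_atTop_atBot).add
    ((tendsto_cdf_atTop ν).const_sub 1)

lemma abs_cdf_div_sub_indicator_le {h ε : ℝ} (hh : 0 < h) (hε : 0 ≤ ε) (t δ : ℝ) :
    |cdf ν ((t - δ) / h) - (Set.Ioi δ).indicator 1 t| ≤
      (Set.Ioi (δ - ε)).indicator 1 t - (Set.Ioi (δ + ε)).indicator 1 t + cdfTail ν (ε / h) := by
  have h0 := cdf_nonneg ν ((t - δ) / h)
  have h1 := cdf_le_one ν ((t - δ) / h)
  have hlo := cdf_nonneg ν (-(ε / h))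
  have hhi := cdf_le_one ν (ε / h)
  simp only [cdfTail, Set.indicator_apply, Set.mem_Ioi, Pi.one_apply]
  rcases le_or_gt t (δ - ε) with ht | ht
  · have := monotone_cdf ν (show (t - δ) / h ≤ -(ε / h) by
      rw [← neg_div]; exact div_le_div_of_nonneg_right (by linarith) hh.le)
    rw [if_neg (by linarith), if_neg (by linarith), if_neg (by linarith), abs_le]
    constructor <;> linarith
  rcases le_or_gt t (δ + ε) with ht' | ht'
  · rw [if_pos ht, if_neg (show ¬δ + ε < t by linarith), abs_le]
    split_ifs <;> constructor <;> linarith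
  · have := monotone_cdf ν (show ε / h ≤ (t - δ) / h from
      div_le_div_of_nonneg_right (by linarith) hh.le)
    rw [if_pos (by linarith), if_pos ht, if_pos ht', abs_le]
    constructor <;> linarith

lemma abs_expect_cdf_sub_empiricalFreq_le {α : Type*} (φ : α → ℝ) (x : ℕ → α) {h ε : ℝ}
    (hh : 0 < h) (hε : 0 ≤ ε) (δ : ℝ) {n : ℕ} (hn : n ≠ 0) :
    |𝔼 i ∈ range n, cdf ν ((φ (x i) - δ) / h) - empiricalFreq x {y | δ < φ y} n| ≤
      empiricalFreq x {y | δ - ε < φ y} n - empiricalFreq x {y | δ + ε < φ y} n +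
        cdfTail ν (ε / h) := by
  rw [empiricalFreq, empiricalFreq, empiricalFreq, ← expect_sub_distrib, ← expect_sub_distrib,
    ← expect_const (nonempty_range_iff.2 hn) (cdfTail ν (ε / h)), ← expect_add_distrib]
  exact (abs_expect_le _ _).trans
    (expect_le_expect fun i _ => abs_cdf_div_sub_indicator_le ν hh hε (φ (x i)) δ)

theorem tendstoUniformlyOn_expect_cdf_of_empiricalFreq {Θ α : Type*} (φ : Θ → α → ℝ)
    (G : Θ → ℝ → ℝ) {s : Set Θ} {K : ℝ≥0} (hG : ∀ θ ∈ s, LipschitzWith K (G θ)) (x : ℕ → α)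
    {h : ℕ → ℝ} (hpos : ∀ n, 0 < h n) (hlim : Tendsto h atTop (𝓝 0))
    (hemp : TendstoUniformlyOn (fun n (q : Θ × ℝ) => empiricalFreq x {y | q.2 < φ q.1 y} n)
      (fun q => G q.1 q.2) atTop (Prod.fst ⁻¹' s)) :
    TendstoUniformlyOn (fun n (q : Θ × ℝ) => 𝔼 i ∈ range n, cdf ν ((φ q.1 (x i) - q.2) / h n))
      (fun q => G q.1 q.2) atTop (Prod.fst ⁻¹' s) := by
  refine tendstoUniformlyOn_of_forall_eventually_abs_sub_le (2 * K + 4) fun ε hε => ?_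
  have hεh : Tendsto (fun n => ε / h n) atTop atTop := by
    simpa only [div_eq_mul_inv, Pi.inv_apply] using
      (tendsto_nhdsWithin_iff.2 ⟨hlim, .of_forall hpos⟩).inv_tendsto_nhdsGT_zero.const_mul_atTop hε
  filter_upwards [Metric.tendstoUniformlyOn_iff.1 hemp ε hε,
    ((tendsto_cdfTail_atTop ν).comp hεh).eventually (eventually_le_nhds hε),
    eventually_ne_atTop 0] with n hemp_n htail hn ⟨θ, δ⟩ (hθ : θ ∈ s)
  have hsmooth := abs_expect_cdf_sub_empiricalFreq_le ν (φ θ) x (hpos n) hε.le δ hn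
  have hlip : G θ (δ - ε) - G θ (δ + ε) ≤ K * (2 * ε) := by
    have := (hG θ hθ).dist_le_mul (δ - ε) (δ + ε)
    rw [Real.dist_eq, Real.dist_eq, show δ - ε - (δ + ε) = -(2 * ε) by ring, abs_neg,
      abs_of_pos (show 0 < 2 * ε by positivity)] at this
    exact (le_abs_self _).trans this
  have hmid := hemp_n (θ, δ) hθ
  have hlo := hemp_n (θ, δ - ε) hθ
  have hhi := hemp_n (θ, δ + ε) hθ
  simp only [Real.dist_eq, abs_lt] at hmid hlo hhi
  simp only [Function.comp_apply] at htail
  rw [abs_le] at hsmooth ⊢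
  constructor <;> linarith

end Smoothing

theorem lemma2_tpr_general
    {p : ℕ} {Ωs : Type*} [MeasurableSpace Ωs] (P : Measure Ωs)
    (μ1 : Measure (EuclideanSpace ℝ (Fin p))) [IsProbabilityMeasure μ1]
    (M : ℝ) (hM : 0 < M)
    (hLip : ∀ θ : EuclideanSpace ℝ (Fin p), ‖θ‖ = 1 → ∀ s u : ℝ,
      |(μ1 {x | ∑ i, θ i * x i ≤ s}).toReal - (μ1 {x | ∑ i, θ i * x i ≤ u}).toReal|
        ≤ M * |s - u|)
    (X : ℕ → Ωs → EuclideanSpace ℝ (Fin p))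
    (hindep : ProbabilityTheory.iIndepFun X P)
    (hid : ∀ i, Measure.map (X i) P = μ1)
    (h : ℕ → ℝ) (hpos : ∀ n, 0 < h n) (hlim : Tendsto h atTop (𝓝 0)) :
    ∀ᵐ ω ∂P, Tendsto (fun n1 : ℕ =>
        sSup ((fun q : EuclideanSpace ℝ (Fin p) × ℝ =>
          |(n1 : ℝ)⁻¹ * ∑ i ∈ Finset.range n1,
              stdGaussianCDF ((∑ k, q.1 k * X i ω k - q.2) / h n1)
            - (μ1 {x | q.2 < ∑ k, q.1 k * x k}).toReal|)
          '' {q | ‖q.1‖ = 1}))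
      atTop (𝓝 0) := by
  have hinner : ∀ θ x : EuclideanSpace ℝ (Fin p), ∑ k, θ k * x k = ⟪θ, x⟫ := fun θ x => by
    simp [PiLp.inner_apply, mul_comm]
  have hK : ∀ θ : EuclideanSpace ℝ (Fin p), ‖θ‖ = 1 →
      LipschitzWith ⟨M, hM.le⟩ (fun δ => μ1.real (upperHalfspace θ δ)) := fun θ hθ =>
    lipschitzWith_measureReal_upperHalfspace μ1 fun s u => by
      simp only [hinner] at hLip
      exact hLip θ hθ s u
  filter_upwards [ae_tendstoUniformlyOn_empiricalFreq_upperHalfspace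
    (fun i j hij => hindep.indepFun hij) hid hK] with ω hω
  have hsmooth := tendstoUniformlyOn_expect_cdf_of_empiricalFreq (gaussianReal 0 1)
    (fun θ x => ⟪θ, x⟫) (fun θ δ => μ1.real (upperHalfspace θ δ)) (s := {θ | ‖θ‖ = 1}) hK
    (X · ω) hpos hlim hω
  simp only [hinner, stdGaussianCDF_eq_cdf, ← expect_range_eq_inv_mul_sum]
  exact tendsto_sSup_abs_sub_of_tendstoUniformlyOn hsmooth

/-- **TPR half of Lemma 2.** Suppose that under `μ₁` the distribution functions of `θᵀX` are
Lipschitz uniformly over unit vectors `θ` and no proper linear subspace has `μ₁`-measure one.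
If `X₁₁, X₁₂, …` are i.i.d. with law `μ₁` and the bandwidths `h_{n₁} > 0` tend to zero, then
`sup_{(θ,δ) ∈ Ω} |T̃PR_{n₁}(θ, δ) − TPR(θ, δ)| → 0` almost surely, where
`Ω = {(θ,δ) : ‖θ‖ = 1}`, `TPR(θ,δ) = μ₁{x : θᵀx > δ}` and
`T̃PR_{n₁}(θ,δ) = n₁⁻¹ ∑_{i<n₁} Φ((θᵀX₁ᵢ − δ)/h_{n₁})`. -/
theorem lemma2_tpr
    {p : ℕ} {Ωs : Type*} [MeasurableSpace Ωs] (P : Measure Ωs) [IsProbabilityMeasure P]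
    (μ1 : Measure (EuclideanSpace ℝ (Fin p))) [IsProbabilityMeasure μ1]
    (M : ℝ) (hM : 0 < M)
    (hLip : ∀ θ : EuclideanSpace ℝ (Fin p), ‖θ‖ = 1 → ∀ s u : ℝ,
      |(μ1 {x | ∑ i, θ i * x i ≤ s}).toReal - (μ1 {x | ∑ i, θ i * x i ≤ u}).toReal|
        ≤ M * |s - u|)
    (hsub : ∀ S : Submodule ℝ (EuclideanSpace ℝ (Fin p)), S ≠ ⊤ →
      μ1 (S : Set (EuclideanSpace ℝ (Fin p))) ≠ 1)
    (X : ℕ → Ωs → EuclideanSpace ℝ (Fin p))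
    (hXm : ∀ i, Measurable (X i))
    (hindep : ProbabilityTheory.iIndepFun X P)
    (hid : ∀ i, Measure.map (X i) P = μ1)
    (h : ℕ → ℝ) (hpos : ∀ n, 0 < h n) (hlim : Tendsto h atTop (𝓝 0)) :
    ∀ᵐ ω ∂P, Tendsto (fun n1 : ℕ =>
        sSup ((fun q : EuclideanSpace ℝ (Fin p) × ℝ =>
          |(n1 : ℝ)⁻¹ * ∑ i ∈ Finset.range n1,
              stdGaussianCDF ((∑ k, q.1 k * X i ω k - q.2) / h n1)
            - (μ1 {x | q.2 < ∑ k, q.1 k * x k}).toReal|)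
          '' {q | ‖q.1‖ = 1}))
      atTop (𝓝 0) :=
  lemma2_tpr_general P μ1 M hM hLip X hindep hid h hpos hlim
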